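/- arXiv:2101.01400 — 2 statements merged into one kernel-verified Lean document; each statement's English description precedes it below -/
import Mathlib

section
/- For fixed distributions p and q on a measurable space X, the functional D ↦ E_{x~p}[log D(x)] + E_{x~q}[log(1 - D(x))] over measurable functions D : X → (0,1) is maximized pointwise by D*(x) = p(x) / (p(x) + q(x)), where p and q denote densities with respect to a common dominating measure. -/
open MeasureTheory Real

/-- The tangent-line bound `log x ≤ x - 1` at `x = t * s / a`, written so that it also holds
(through `log 0 = 0`) when `a = 0`. -/
lemma mul_log_le_mul_log_div_add {a t s : ℝ} (ha : 0 ≤ a) (ht : 0 < t) (hs : 0 < s) :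
    a * log t ≤ a * log (a / s) + (t * s - a) := by
  rcases ha.eq_or_lt with rfl | ha
  · simp only [zero_mul, zero_div, log_zero, zero_add, sub_zero]
    positivity
  have hlog : log t = log (a / s) + log (t * s / a) := by
    rw [← log_mul (by positivity) (by positivity)]
    field_simp
  have hle : a * log (t * s / a) ≤ t * s - a := by
    have := mul_le_mul_of_nonneg_left (log_le_sub_one_of_pos (by positivity : 0 < t * s / a)) ha.le
    rwa [mul_sub, mul_div_cancel₀ _ ha.ne', mul_one] at this
  rw [hlog, mul_add]
  linarith

lemma mul_log_add_mul_log_one_sub_le {a b t : ℝ} (ha : 0 ≤ a) (hb : 0 ≤ b) (hab : 0 < a + b)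
    (ht : t ∈ Set.Ioo (0 : ℝ) 1) :
    a * log t + b * log (1 - t) ≤ a * log (a / (a + b)) + b * log (1 - a / (a + b)) := by
  obtain ⟨ht0, ht1⟩ := ht
  have hcompl : 1 - a / (a + b) = b / (a + b) := by field_simp; ring
  rw [hcompl]
  linarith [mul_log_le_mul_log_div_add ha ht0 hab,
    mul_log_le_mul_log_div_add hb (sub_pos.2 ht1) hab]

theorem gan_optimal_discriminator_general
    {X : Type*} [MeasurableSpace X] (μ : Measure X)
    (f g : X → ℝ)
    (hf : ∀ x, 0 ≤ f x) (hg : ∀ x, 0 ≤ g x) (hfg : ∀ x, 0 < f x + g x)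
    (D : X → ℝ) (hD : ∀ x, D x ∈ Set.Ioo (0 : ℝ) 1)
    (hint : Integrable (fun x => f x * Real.log (D x) + g x * Real.log (1 - D x)) μ)
    (hintstar : Integrable (fun x =>
      f x * Real.log (f x / (f x + g x)) + g x * Real.log (1 - f x / (f x + g x))) μ) :
    ∫ x, (f x * Real.log (D x) + g x * Real.log (1 - D x)) ∂μ ≤
      ∫ x, (f x * Real.log (f x / (f x + g x)) +
        g x * Real.log (1 - f x / (f x + g x))) ∂μ :=
  integral_mono hint hintstar fun x => mul_log_add_mul_log_one_sub_le (hf x) (hg x) (hfg x) (hD x)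

/-- GAN optimal discriminator: for fixed densities `f` (of `p`) and `g` (of `q`) with respect to
a common dominating σ-finite measure `μ`, the functional
`D ↦ E_{x~p}[log D(x)] + E_{x~q}[log (1 - D(x))]` over measurable `D : X → (0,1)`
is maximized by the pointwise maximizer `D*(x) = f x / (f x + g x)`. -/
theorem gan_optimal_discriminator
    {X : Type*} [MeasurableSpace X] (μ : Measure X) [SigmaFinite μ]
    (f g : X → ℝ) (hfm : Measurable f) (hgm : Measurable g)
    (hf : ∀ x, 0 ≤ f x) (hg : ∀ x, 0 ≤ g x) (hfg : ∀ x, 0 < f x + g x)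
    (hfprob : ∫ x, f x ∂μ = 1) (hgprob : ∫ x, g x ∂μ = 1)
    (D : X → ℝ) (hDm : Measurable D) (hD : ∀ x, D x ∈ Set.Ioo (0 : ℝ) 1)
    (hint : Integrable (fun x => f x * Real.log (D x) + g x * Real.log (1 - D x)) μ)
    (hintstar : Integrable (fun x =>
      f x * Real.log (f x / (f x + g x)) + g x * Real.log (1 - f x / (f x + g x))) μ) :
    ∫ x, (f x * Real.log (D x) + g x * Real.log (1 - D x)) ∂μ ≤
      ∫ x, (f x * Real.log (f x / (f x + g x)) +
        g x * Real.log (1 - f x / (f x + g x))) ∂μ :=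
  gan_optimal_discriminator_general μ f g hf hg hfg D hD hint hintstar
end

section
/- For probability distributions p, p_g, p_c on a finite set X, the quantity 2·JSD(p ‖ (p_g + p_c)/2) + KL(p ‖ p_c) is nonnegative, and equals 0 if and only if p = p_g = p_c. -/
open scoped BigOperators

/-- Kullback–Leibler divergence on a finite set (convention `0 * log 0 = 0` via junk values). -/
noncomputable def KL {X : Type*} [Fintype X] (p q : X → ℝ) : ℝ :=
  ∑ x, p x * Real.log (p x / q x)

/-- Jensen–Shannon divergence on a finite set. -/
noncomputable def JSD {X : Type*} [Fintype X] (p q : X → ℝ) : ℝ :=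
  (1 / 2) * KL p (fun x => (p x + q x) / 2) + (1 / 2) * KL q (fun x => (p x + q x) / 2)

lemma point_ineq (a b : ℝ) (ha : 0 ≤ a) (hb : 0 ≤ b) (hab : 0 < a → 0 < b) :
    a - b ≤ a * Real.log (a / b) ∧ (a * Real.log (a / b) = a - b ↔ a = b) := by
  rcases eq_or_lt_of_le ha with h | h
  · subst h
    simp only [zero_mul, zero_sub]
    refine ⟨by linarith, ?_, ?_⟩
    · intro h'; linarith
    · intro h'; rw [← h']; ring
  · have hb' : 0 < b := hab h
    have hba : 0 < b / a := div_pos hb' h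
    have hlog : Real.log (a / b) = - Real.log (b / a) := by
      rw [← Real.log_inv]
      congr 1
      field_simp
    have hle : Real.log (b / a) ≤ b / a - 1 := Real.log_le_sub_one_of_pos hba
    constructor
    · have : a * Real.log (b / a) ≤ a * (b / a - 1) :=
        mul_le_mul_of_nonneg_left hle ha
      rw [hlog]
      have h2 : a * (b / a - 1) = b - a := by field_simp
      nlinarith
    · constructor
      · intro heq
        by_contra hne
        have hne' : b / a ≠ 1 := by
          intro h1
          apply hne
          field_simp at h1
          linarith
        have hstrict : Real.log (b / a) < b / a - 1 :=
          Real.log_lt_sub_one_of_pos hba hne'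
        have : a * Real.log (b / a) < a * (b / a - 1) :=
          mul_lt_mul_of_pos_left hstrict h
        have h2 : a * (b / a - 1) = b - a := by field_simp
        rw [hlog] at heq
        nlinarith
      · intro heq
        subst heq
        rw [div_self (ne_of_gt h), Real.log_one]
        ring

lemma gibbs {X : Type*} [Fintype X] (p q : X → ℝ)
    (hp : ∀ x, 0 ≤ p x) (hq : ∀ x, 0 ≤ q x)
    (hps : ∑ x, p x = 1) (hqs : ∑ x, q x = 1)
    (hpos : ∀ x, 0 < p x → 0 < q x) :
    0 ≤ KL p q ∧ (KL p q = 0 ↔ p = q) := by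
  have key : ∀ x, p x - q x ≤ p x * Real.log (p x / q x) ∧
      (p x * Real.log (p x / q x) = p x - q x ↔ p x = q x) :=
    fun x => point_ineq _ _ (hp x) (hq x) (hpos x)
  have hsum : ∑ x, (p x - q x) = 0 := by
    rw [Finset.sum_sub_distrib, hps, hqs]; ring
  have h1 : 0 ≤ KL p q := by
    rw [KL]
    calc (0:ℝ) = ∑ x, (p x - q x) := hsum.symm
    _ ≤ _ := Finset.sum_le_sum fun x _ => (key x).1
  refine ⟨h1, ?_, ?_⟩
  · intro h0
    have hzero : ∀ x ∈ Finset.univ,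
        p x * Real.log (p x / q x) - (p x - q x) = 0 := by
      rw [← Finset.sum_eq_zero_iff_of_nonneg (fun x _ => sub_nonneg.2 (key x).1)]
      rw [Finset.sum_sub_distrib, hsum, sub_zero]
      exact h0
    funext x
    exact (key x).2.1 (by linarith [hzero x (Finset.mem_univ x)])
  · intro heq
    subst heq
    rw [KL]
    apply Finset.sum_eq_zero
    intro x _
    rcases eq_or_ne (p x) 0 with h | h
    · simp [h]
    · rw [div_self h, Real.log_one, mul_zero]

/-- Core of the Relaxed cGAN equilibrium theorem: for probability distributions `p, p_g, p_c`
on a finite set (with `p_c` positive wherever `p` is, so `KL (p ‖ p_c)` is finite),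
`2 JSD(p ‖ (p_g + p_c)/2) + KL(p ‖ p_c) ≥ 0` with equality iff `p = p_g = p_c`. -/
theorem relaxed_cgan_equilibrium
    {X : Type*} [Fintype X] (p pg pc : X → ℝ)
    (hp : ∀ x, 0 ≤ p x) (hpg : ∀ x, 0 ≤ pg x) (hpc : ∀ x, 0 ≤ pc x)
    (hps : ∑ x, p x = 1) (hpgs : ∑ x, pg x = 1) (hpcs : ∑ x, pc x = 1)
    (hac : ∀ x, 0 < p x → 0 < pc x) :
    0 ≤ 2 * JSD p (fun x => (pg x + pc x) / 2) + KL p pc ∧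
    (2 * JSD p (fun x => (pg x + pc x) / 2) + KL p pc = 0 ↔ p = pg ∧ p = pc) := by
  set q : X → ℝ := fun x => (pg x + pc x) / 2 with hqdef
  set m : X → ℝ := fun x => (p x + q x) / 2 with hmdef
  have hq : ∀ x, 0 ≤ q x := fun x => by
    have := hpg x; have := hpc x; simp [hqdef]; linarith
  have hm : ∀ x, 0 ≤ m x := fun x => by
    have := hp x; have := hq x; simp only [hmdef]; linarith
  have hqs : ∑ x, q x = 1 := by
    simp only [hqdef]
    rw [← Finset.sum_div, Finset.sum_add_distrib, hpgs, hpcs]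
    norm_num
  have hms : ∑ x, m x = 1 := by
    simp only [hmdef]
    rw [← Finset.sum_div, Finset.sum_add_distrib, hps, hqs]
    norm_num
  have hposm : ∀ x, 0 < p x → 0 < m x := fun x hx => by
    have := hq x; simp only [hmdef]; positivity
  have hposm' : ∀ x, 0 < q x → 0 < m x := fun x hx => by
    have := hp x; simp only [hmdef]; positivity
  obtain ⟨hA, hAeq⟩ := gibbs p m hp hm hps hms hposm
  obtain ⟨hB, hBeq⟩ := gibbs q m hq hm hqs hms hposm'
  obtain ⟨hC, hCeq⟩ := gibbs p pc hp hpc hps hpcs hac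
  have hsplit : 2 * JSD p q + KL p pc = KL p m + KL q m + KL p pc := by
    rw [JSD, hmdef]; ring
  constructor
  · rw [hsplit]; linarith
  · rw [hsplit]
    constructor
    · intro h0
      have hA0 : KL p m = 0 := by linarith
      have hB0 : KL q m = 0 := by linarith
      have hC0 : KL p pc = 0 := by linarith
      have hpm := hAeq.1 hA0
      have hqm := hBeq.1 hB0
      have hppc := hCeq.1 hC0
      have hpq : p = q := hpm.trans hqm.symm
      constructor
      · funext x
        have h1 : p x = (pg x + pc x) / 2 := congrFun hpq x
        have h2 : p x = pc x := congrFun hppc x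
        linarith
      · exact hppc
    · rintro ⟨hg, hc⟩
      have hpq : p = q := by
        funext x
        simp only [hqdef, ← congrFun hg x, ← congrFun hc x]
        ring
      have hpm : p = m := by
        funext x
        simp only [hmdef, ← congrFun hpq x]
        ring
      have hqm : q = m := by rw [← hpq]; exact hpm
      rw [hAeq.2 hpm, hBeq.2 hqm, hCeq.2 hc]
      ring
end
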